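/- arXiv:2201.00850 — 2 statements merged into one kernel-verified Lean document; each statement's English description precedes it below -/
import Mathlib

section
/- Let W ∈ ℝ^{n×n}, m ∈ ℝ^n with m > 0, and τ > 0. If ρ(|W|) < 1, then for every c ∈ ℝ^n the equation x = [W x + c]_0^m has a unique solution x*(c), and the linear-threshold dynamics τ ẋ = −x + [W x + c]_0^m is globally exponentially stable to x*(c). -/
open Matrix

noncomputable section

/-- componentwise clamping of `x` to the box `[0, m]` -/
def clamp {ι : Type*} (m x : ι → ℝ) : ι → ℝ := fun k => min (max (x k) 0) (m k)

/-- entrywise absolute value of a matrix -/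
def eAbs {α β : Type*} (A : Matrix α β ℝ) : Matrix α β ℝ := Matrix.of fun k l => |A k l|

/-- spectral radius of a real matrix: the largest modulus of its (complex) spectrum -/
def specRad {ι : Type*} [Fintype ι] [DecidableEq ι] (A : Matrix ι ι ℝ) : ℝ :=
  sSup ((fun z : ℂ => ‖z‖) '' spectrum ℂ (A.map (fun a : ℝ => (a : ℂ))))

/-!
Put `A = |W|` and pick `ρ(A) < θ < 1`. By Gelfand's formula some power `N ≥ 1` has
`‖(A/θ)ᴺ‖_∞ ≤ 1`, and then the finite geometric sum `v = ∑_{k<N} (A/θ)ᵏ 1` is a positive vector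
with `A v ≤ θ v`. Clamping is `1`-Lipschitz in each coordinate, so `x ↦ [W x + c]_0^m` is a
`θ`-contraction for the weighted sup norm `max_k |x_k| / v_k`, and Banach's theorem gives `x*`.
Along a trajectory, `e^{t/τ} (x(t) - x*)` has derivative of norm at most `θ/τ` times its own norm,
so Gronwall's inequality yields decay at rate `(1 - θ)/τ`.
-/

open Filter
open scoped NNReal

theorem spectrum.eventually_nnnorm_pow_lt {A : Type*} [NormedRing A] [NormedAlgebra ℂ A]
    [CompleteSpace A] {a : A} {r : ℝ≥0} (h : spectralRadius ℂ a < r) :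
    ∀ᶠ k : ℕ in atTop, ‖a ^ k‖₊ < r ^ k := by
  filter_upwards [(pow_nnnorm_pow_one_div_tendsto_nhds_spectralRadius a).eventually_lt_const h,
    eventually_gt_atTop 0] with k hk hk0
  rw [one_div, ENNReal.rpow_inv_lt_iff (by positivity), ENNReal.rpow_natCast] at hk
  exact_mod_cast hk

namespace Matrix

variable {ι : Type*} [Fintype ι]

theorem specRad_nonneg [DecidableEq ι] (A : Matrix ι ι ℝ) : 0 ≤ specRad A :=
  Real.sSup_nonneg <| by rintro _ ⟨z, -, rfl⟩; exact norm_nonneg z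

theorem mulVec_mono_of_nonneg {A : Matrix ι ι ℝ} (hA : ∀ i j, 0 ≤ A i j) {x y : ι → ℝ}
    (hxy : x ≤ y) : A *ᵥ x ≤ A *ᵥ y :=
  fun i => Finset.sum_le_sum fun j _ => mul_le_mul_of_nonneg_left (hxy j) (hA i j)

theorem abs_mulVec_le (W : Matrix ι ι ℝ) (x : ι → ℝ) : |W *ᵥ x| ≤ eAbs W *ᵥ |x| := fun i =>
  (Finset.abs_sum_le_sum_abs _ _).trans_eq <| by simp [eAbs, mulVec, dotProduct, abs_mul]

theorem pow_mulVec_nonneg_of_nonneg [DecidableEq ι] {A : Matrix ι ι ℝ} (hA : ∀ i j, 0 ≤ A i j)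
    {x : ι → ℝ} (hx : 0 ≤ x) (k : ℕ) : 0 ≤ A ^ k *ᵥ x := by
  induction k with
  | zero => simpa using hx
  | succ k ih =>
    rw [pow_succ', ← mulVec_mulVec]
    simpa using mulVec_mono_of_nonneg hA ih

theorem exists_pos_mulVec_le_of_pow_mulVec_le [DecidableEq ι] {B : Matrix ι ι ℝ}
    (hB : ∀ i j, 0 ≤ B i j) {u : ι → ℝ} (hu : ∀ i, 0 < u i) {N : ℕ} (hN : 1 ≤ N)
    (hBN : B ^ N *ᵥ u ≤ u) : ∃ v : ι → ℝ, (∀ i, 0 < v i) ∧ B *ᵥ v ≤ v := by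
  -- `v = ∑_{k<N} Bᵏ u` satisfies `B v = v - u + Bᴺ u`
  set S := ∑ k ∈ Finset.range N, B ^ k
  have hBS : B * S = S + (B ^ N - 1) := by rw [← mul_geom_sum, sub_mul, one_mul]; abel
  refine ⟨S *ᵥ u, fun i => (hu i).trans_le ?_, fun i => ?_⟩
  · rw [sum_mulVec, Finset.sum_apply]
    simpa using Finset.single_le_sum
      (fun k _ => pow_mulVec_nonneg_of_nonneg hB (fun j => (hu j).le) k i)
      (Finset.mem_range.2 (by omega : 0 < N))
  · have := hBN i
    simp only [mulVec_mulVec, hBS, add_mulVec, sub_mulVec, one_mulVec, Pi.add_apply, Pi.sub_apply]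
    linarith

section LinftyNorm

attribute [local instance] Matrix.linftyOpNormedRing Matrix.linftyOpNormedAlgebra

variable [DecidableEq ι]

theorem spectralRadius_map_ofReal_le_specRad (A : Matrix ι ι ℝ) :
    spectralRadius ℂ (A.map ((↑) : ℝ → ℂ)) ≤ ENNReal.ofReal (specRad A) := by
  refine iSup₂_le fun z hz => ?_
  exact (ofReal_norm z).symm.trans_le <| ENNReal.ofReal_le_ofReal <| le_csSup
    ((spectrum.isCompact _).image continuous_norm).bddAbove (Set.mem_image_of_mem _ hz)

theorem linfty_opNNNorm_map_ofReal (M : Matrix ι ι ℝ) : ‖M.map ((↑) : ℝ → ℂ)‖₊ = ‖M‖₊ := by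
  simp [linfty_opNNNorm_def]

theorem exists_linfty_opNNNorm_pow_lt_of_specRad_lt {A : Matrix ι ι ℝ} {r : ℝ≥0}
    (h : specRad A < r) : ∃ N ≥ 1, ‖A ^ N‖₊ < r ^ N := by
  have hρ : spectralRadius ℂ (A.map ((↑) : ℝ → ℂ)) < r :=
    (spectralRadius_map_ofReal_le_specRad A).trans_lt <|
      (ENNReal.ofReal_lt_coe_iff (specRad_nonneg A)).2 h
  obtain ⟨N, hN⟩ := ((spectrum.eventually_nnnorm_pow_lt hρ).and (eventually_ge_atTop 1)).exists
  refine ⟨N, hN.2, ?_⟩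
  rw [← linfty_opNNNorm_map_ofReal]
  exact Matrix.map_pow A Complex.ofRealHom N ▸ hN.1

theorem mulVec_one_apply_le_linfty_opNNNorm (M : Matrix ι ι ℝ) (i : ι) : (M *ᵥ 1) i ≤ ‖M‖₊ := by
  calc (M *ᵥ 1) i ≤ ‖M *ᵥ 1‖ := (le_abs_self _).trans (norm_le_pi_norm (M *ᵥ 1) i)
    _ ≤ ‖M‖ * ‖(1 : ι → ℝ)‖ := linfty_opNorm_mulVec M 1
    _ ≤ ‖M‖ := mul_le_of_le_one_right (norm_nonneg _) <|
      (pi_norm_le_iff_of_nonneg zero_le_one).2 fun _ => by simp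

end LinftyNorm

theorem exists_pos_mulVec_le_smul_of_specRad_lt [DecidableEq ι] {A : Matrix ι ι ℝ}
    (hA : ∀ i j, 0 ≤ A i j) {θ : ℝ≥0} (hθ : specRad A < θ) :
    ∃ v : ι → ℝ, (∀ i, 0 < v i) ∧ A *ᵥ v ≤ (θ : ℝ) • v := by
  have hθ0 : (0 : ℝ) < θ := (specRad_nonneg A).trans_lt hθ
  obtain ⟨N, hN, hAN⟩ := exists_linfty_opNNNorm_pow_lt_of_specRad_lt hθ
  have hBN : ((θ : ℝ)⁻¹ • A) ^ N *ᵥ 1 ≤ 1 := fun i => by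
    have h := (mulVec_one_apply_le_linfty_opNNNorm (A ^ N) i).trans (NNReal.coe_lt_coe.2 hAN).le
    rw [smul_pow, smul_mulVec, Pi.smul_apply, smul_eq_mul, inv_pow, Pi.one_apply]
    push_cast at h
    exact inv_mul_le_one_of_le₀ h (by positivity)
  obtain ⟨v, hv, hBv⟩ := exists_pos_mulVec_le_of_pow_mulVec_le (B := (θ : ℝ)⁻¹ • A)
    (fun i j => mul_nonneg (inv_nonneg.2 hθ0.le) (hA i j)) (fun _ => one_pos) hN hBN
  refine ⟨v, hv, fun i => ?_⟩
  have := mul_le_mul_of_nonneg_left (hBv i) hθ0.le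
  rwa [smul_mulVec, Pi.smul_apply, smul_eq_mul, mul_inv_cancel_left₀ hθ0.ne'] at this

end Matrix

section Relaxation

open Real

variable {E F : Type*} [NormedAddCommGroup E] [NormedSpace ℝ E] [NormedAddCommGroup F]
  [NormedSpace ℝ F]

def IsGloballyExpStable (f : E → E) (p : E) : Prop :=
  ∃ C ≥ (1 : ℝ), ∃ lam > (0 : ℝ), ∀ x : ℝ → E, (∀ t, HasDerivAt x (f (x t)) t) →
    ∀ t ≥ (0 : ℝ), ‖x t - p‖ ≤ C * ‖x 0 - p‖ * exp (-lam * t)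

theorem IsGloballyExpStable.of_conj (D : E ≃L[ℝ] F) {f : E → E} {p : E}
    (h : IsGloballyExpStable (D ∘ f ∘ D.symm) (D p)) : IsGloballyExpStable f p := by
  obtain ⟨C, hC, lam, hlam, hdecay⟩ := h
  set c := ‖(D.symm : F →L[ℝ] E)‖ * C * ‖(D : E →L[ℝ] F)‖
  refine ⟨max 1 c, le_max_left _ _, lam, hlam, fun x hx t ht => ?_⟩
  have hDx : ∀ t, HasDerivAt (D ∘ x) ((D ∘ f ∘ D.symm) ((D ∘ x) t)) t := fun t => by
    simpa using (D : E →L[ℝ] F).hasFDerivAt.comp_hasDerivAt t (hx t)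
  have h0 : ‖D (x 0) - D p‖ ≤ ‖(D : E →L[ℝ] F)‖ * ‖x 0 - p‖ := by
    rw [← map_sub]; exact (D : E →L[ℝ] F).le_opNorm _
  calc ‖x t - p‖ = ‖D.symm (D (x t) - D p)‖ := by simp
    _ ≤ ‖(D.symm : F →L[ℝ] E)‖ * ‖D (x t) - D p‖ := (D.symm : F →L[ℝ] E).le_opNorm _
    _ ≤ ‖(D.symm : F →L[ℝ] E)‖ * (C * ‖D (x 0) - D p‖ * exp (-lam * t)) := by
        gcongr; exact hdecay (D ∘ x) hDx t ht
    _ ≤ ‖(D.symm : F →L[ℝ] E)‖ * (C * (‖(D : E →L[ℝ] F)‖ * ‖x 0 - p‖) * exp (-lam * t)) := by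
        gcongr
    _ = c * ‖x 0 - p‖ * exp (-lam * t) := by ring
    _ ≤ max 1 c * ‖x 0 - p‖ * exp (-lam * t) := by gcongr; exact le_max_right _ _

theorem LipschitzWith.norm_sub_le_of_hasDerivAt_relaxation {G : E → E} {K : ℝ≥0}
    (hG : LipschitzWith K G) {p : E} (hp : G p = p) {τ : ℝ} (hτ : 0 < τ) {x : ℝ → E}
    (hx : ∀ t, HasDerivAt x (τ⁻¹ • (-x t + G (x t))) t) {t : ℝ} (ht : 0 ≤ t) :
    ‖x t - p‖ ≤ ‖x 0 - p‖ * exp (-((1 - K) / τ) * t) := by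
  set ψ : ℝ → E := fun s => exp (s / τ) • (x s - p)
  have hψ : ∀ s, HasDerivAt ψ (exp (s / τ) • τ⁻¹ • (G (x s) - G p)) s := by
    intro s
    convert (((hasDerivAt_id' s).div_const τ).exp).fun_smul ((hx s).sub_const p) using 1
    rw [hp]
    module
  have hbound : ∀ s, ‖exp (s / τ) • τ⁻¹ • (G (x s) - G p)‖ ≤ K / τ * ‖ψ s‖ := by
    intro s
    have hGs : ‖G (x s) - G p‖ ≤ K * ‖x s - p‖ := by
      simpa only [dist_eq_norm] using hG.dist_le_mul (x s) p
    rw [norm_smul, norm_smul, norm_smul, norm_inv, norm_of_nonneg (exp_pos _).le,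
      norm_of_nonneg hτ.le]
    calc exp (s / τ) * (τ⁻¹ * ‖G (x s) - G p‖) ≤ exp (s / τ) * (τ⁻¹ * (K * ‖x s - p‖)) := by
          gcongr
      _ = K / τ * (exp (s / τ) * ‖x s - p‖) := by ring
  have hgron : ‖ψ t‖ ≤ ‖ψ 0‖ * exp (K / τ * t) := by
    simpa [gronwallBound_ε0] using norm_le_gronwallBound_of_norm_deriv_right_le
      (fun s _ => (hψ s).continuousAt.continuousWithinAt) (fun s _ => (hψ s).hasDerivWithinAt)
      le_rfl (fun s _ => (hbound s).trans_eq (add_zero _).symm) t ⟨ht, le_rfl⟩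
  have hψt : ‖ψ t‖ = exp (t / τ) * ‖x t - p‖ := by
    rw [norm_smul, norm_of_nonneg (exp_pos _).le]
  have hψ0 : ψ 0 = x 0 - p := by simp [ψ]
  rw [hψt, hψ0] at hgron
  calc ‖x t - p‖ = exp (-(t / τ)) * (exp (t / τ) * ‖x t - p‖) := by
        rw [← mul_assoc, ← exp_add, neg_add_cancel, exp_zero, one_mul]
    _ ≤ exp (-(t / τ)) * (‖x 0 - p‖ * exp (K / τ * t)) := by gcongr
    _ = ‖x 0 - p‖ * exp (-((1 - K) / τ) * t) := by
        rw [mul_left_comm, ← exp_add]; congr 2; ring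

theorem LipschitzWith.isGloballyExpStable_relaxation {G : E → E} {K : ℝ≥0}
    (hG : LipschitzWith K G) (hK : K < 1) {p : E} (hp : G p = p) {τ : ℝ} (hτ : 0 < τ) :
    IsGloballyExpStable (fun y => τ⁻¹ • (-y + G y)) p :=
  ⟨1, le_rfl, (1 - K) / τ, div_pos (sub_pos.2 hK) hτ, fun _ hx _ ht => by
    simpa only [one_mul] using hG.norm_sub_le_of_hasDerivAt_relaxation hp hτ hx ht⟩

theorem ContractingWith.exists_unique_fixedPoint_isGloballyExpStable_of_conj [CompleteSpace F]
    (D : E ≃L[ℝ] F) {G : E → E} {K : ℝ≥0} (hG : ContractingWith K (D ∘ G ∘ D.symm))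
    {τ : ℝ} (hτ : 0 < τ) :
    ∃ p : E, (p = G p ∧ ∀ y, y = G y → y = p) ∧
      IsGloballyExpStable (fun y => τ⁻¹ • (-y + G y)) p := by
  set q := ContractingWith.fixedPoint _ hG
  have hq : D (G (D.symm q)) = q := hG.fixedPoint_isFixedPt
  refine ⟨D.symm q, ⟨by simpa using congrArg D.symm hq.symm, fun y hy => ?_⟩,
    IsGloballyExpStable.of_conj D ?_⟩
  · rw [← D.symm_apply_apply y]
    exact congrArg D.symm (hG.fixedPoint_unique (by simp [Function.IsFixedPt, ← hy]))
  · convert hG.2.isGloballyExpStable_relaxation hG.1 (by simpa using hq) hτ using 1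
    · ext y; simp
    · simp

end Relaxation

def scaleEquiv {ι : Type*} (v : ι → ℝ) (hv : ∀ i, v i ≠ 0) : (ι → ℝ) ≃L[ℝ] (ι → ℝ) :=
  ContinuousLinearEquiv.piCongrRight fun i =>
    ContinuousLinearEquiv.unitsEquivAut ℝ (Units.mk0 (v i) (hv i))

section Scale

variable {ι : Type*} {v : ι → ℝ} (hv : ∀ i, v i ≠ 0)

@[simp]
theorem scaleEquiv_apply (x : ι → ℝ) (i : ι) : scaleEquiv v hv x i = x i * v i := rfl

@[simp]
theorem scaleEquiv_symm_apply (x : ι → ℝ) (i : ι) : (scaleEquiv v hv).symm x i = x i / v i := by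
  simp [scaleEquiv, div_eq_mul_inv]

end Scale

theorem abs_clamp_sub_clamp_le {ι : Type*} (m a b : ι → ℝ) :
    |clamp m a - clamp m b| ≤ |a - b| := fun k =>
  calc |clamp m a k - clamp m b k| ≤ max |max (a k) 0 - max (b k) 0| |m k - m k| :=
        abs_min_sub_min_le_max _ _ _ _
    _ = |max (a k) 0 - max (b k) 0| := by simp
    _ ≤ |a k - b k| := abs_max_sub_max_le_abs _ _ _

theorem lipschitzWith_scaleEquiv_conj {ι : Type*} [Fintype ι] {A : Matrix ι ι ℝ}
    (hA : ∀ i j, 0 ≤ A i j) {θ : ℝ≥0} {v : ι → ℝ} (hv : ∀ i, 0 < v i)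
    (hAv : A *ᵥ v ≤ (θ : ℝ) • v) {F : (ι → ℝ) → ι → ℝ} (hF : ∀ a b, |F a - F b| ≤ A *ᵥ |a - b|) :
    LipschitzWith θ
      ((scaleEquiv v fun i => (hv i).ne').symm ∘ F ∘ scaleEquiv v fun i => (hv i).ne') := by
  set e := scaleEquiv v fun i => (hv i).ne'
  refine LipschitzWith.of_dist_le_mul fun y z => (dist_pi_le_iff (by positivity)).2 fun k => ?_
  have hyz : |e y - e z| ≤ dist y z • v := fun j => by
    simpa [e, ← sub_mul, abs_mul, abs_of_pos (hv j), ← Real.dist_eq] using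
      mul_le_mul_of_nonneg_right (dist_le_pi_dist y z j) (hv j).le
  calc dist ((e.symm ∘ F ∘ e) y k) ((e.symm ∘ F ∘ e) z k) = |F (e y) k - F (e z) k| / v k := by
        simp only [Function.comp_apply, e, scaleEquiv_symm_apply]
        rw [Real.dist_eq, div_sub_div_same, abs_div, abs_of_pos (hv k)]
    _ ≤ (A *ᵥ (dist y z • v)) k / v k :=
        div_le_div_of_nonneg_right ((hF _ _ k).trans (mulVec_mono_of_nonneg hA hyz k))
          (hv k).le
    _ ≤ θ * dist y z := by
        rw [mulVec_smul, Pi.smul_apply, smul_eq_mul, div_le_iff₀ (hv k)]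
        have := mul_le_mul_of_nonneg_left (hAv k) (dist_nonneg (x := y) (y := z))
        simp only [Pi.smul_apply, smul_eq_mul] at this
        linarith

theorem linear_threshold_GES_of_specRad_lt_one_general {n : ℕ}
    (W : Matrix (Fin n) (Fin n) ℝ) (m : Fin n → ℝ)
    (τ : ℝ) (hτ : 0 < τ)
    (hρ : specRad (eAbs W) < 1) :
    ∀ c : Fin n → ℝ, ∃ xstar : Fin n → ℝ,
      (xstar = clamp m (W *ᵥ xstar + c) ∧
        ∀ y : Fin n → ℝ, y = clamp m (W *ᵥ y + c) → y = xstar) ∧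
      ∃ C ≥ (1:ℝ), ∃ lam > (0:ℝ), ∀ x : ℝ → Fin n → ℝ,
        (∀ t, HasDerivAt x (τ⁻¹ • (-x t + clamp m (W *ᵥ x t + c))) t) →
        ∀ t ≥ (0:ℝ), ‖x t - xstar‖ ≤ C * ‖x 0 - xstar‖ * Real.exp (-lam * t) := by
  intro c
  obtain ⟨θ, hρθ, hθ1⟩ := exists_between hρ
  lift θ to ℝ≥0 using (specRad_nonneg _).trans hρθ.le
  obtain ⟨v, hv, hAv⟩ :=
    exists_pos_mulVec_le_smul_of_specRad_lt (fun i j => abs_nonneg (W i j)) hρθ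
  have hF : ∀ a b, |clamp m (W *ᵥ a + c) - clamp m (W *ᵥ b + c)| ≤ eAbs W *ᵥ |a - b| :=
    fun a b => (abs_clamp_sub_clamp_le m _ _).trans <| by
      simpa [← mulVec_sub] using abs_mulVec_le W (a - b)
  have hcontr : ContractingWith θ ((scaleEquiv v fun i => (hv i).ne').symm ∘
      (fun x => clamp m (W *ᵥ x + c)) ∘ scaleEquiv v fun i => (hv i).ne') :=
    ⟨by exact_mod_cast hθ1, lipschitzWith_scaleEquiv_conj (fun i j => abs_nonneg (W i j)) hv hAv hF⟩
  exact ContractingWith.exists_unique_fixedPoint_isGloballyExpStable_of_conj _ hcontr hτ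

/-- If `ρ(|W|) < 1` then for every constant input `c` the equation `x = [W x + c]_0^m` has a
unique solution `x*(c)` and the linear-threshold dynamics `τ ẋ = −x + [W x + c]_0^m` is
globally exponentially stable to `x*(c)`. -/
theorem linear_threshold_GES_of_specRad_lt_one {n : ℕ}
    (W : Matrix (Fin n) (Fin n) ℝ) (m : Fin n → ℝ) (hm : ∀ k, 0 < m k)
    (τ : ℝ) (hτ : 0 < τ)
    (hρ : specRad (eAbs W) < 1) :
    ∀ c : Fin n → ℝ, ∃ xstar : Fin n → ℝ,
      (xstar = clamp m (W *ᵥ xstar + c) ∧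
        ∀ y : Fin n → ℝ, y = clamp m (W *ᵥ y + c) → y = xstar) ∧
      ∃ C ≥ (1:ℝ), ∃ lam > (0:ℝ), ∀ x : ℝ → Fin n → ℝ,
        (∀ t, HasDerivAt x (τ⁻¹ • (-x t + clamp m (W *ᵥ x t + c))) t) →
        ∀ t ≥ (0:ℝ), ‖x t - xstar‖ ≤ C * ‖x 0 - xstar‖ * Real.exp (-lam * t) :=
  linear_threshold_GES_of_specRad_lt_one_general W m τ hτ hρ
end
end

section
/- Consider a layer with linear-threshold dynamics τ ẋ = −x + [W x + w(t) + B u(t) + c]_0^m, where x = (x^0, x^1) ∈ ℝ^{r} × ℝ^{n−r} is the partition into task-irrelevant and task-relevant components, W is partitioned accordingly with W^{0,all} = [W^{00} W^{01}] its top block row, B = [B^0; 0] with B^0 ∈ ℝ^{r×p} of full rank and p ≥ r, w : ℝ_{≥0} → ℝ^n is a continuous interconnection input, and 0 ≤ x(0) ≤ m. Suppose the feedback-feedforward control u(t) = K x(t) + ū(t) satisfies the entrywise inequalities B^0 K ≤ −W^{0,all} and B^0 ū(t) ≤ −w^0(t) − c^0 for all t ≥ 0 (where w^0 and c^0 are the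 task-irrelevant blocks of w and c). Then the closed-loop task-irrelevant dynamics reduces to τ ẋ^0 = −x^0, so that x^0(t) = e^{−t/τ} x^0(0) and the task-irrelevant states converge exponentially to zero. -/
/-!
On the task-irrelevant rows the feedback `B^0 K ≤ -W^{0,all}` cancels the recurrent input
as long as the state is nonnegative, and the feedforward `B^0 ū ≤ -w^0 - c^0` cancels the
remaining input, so the clamp outputs `0` there. Nonnegativity of the whole state holds because
every component satisfies `τ ẋ = -x + g` with `g ≥ 0`, i.e. `e^{t/τ} x(t)` is nondecreasing.
The task-irrelevant rows then obey `τ ẋ^0 = -x^0`, along which `e^{t/τ} x^0(t)` is constant.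
-/

open Matrix

noncomputable section

theorem clamp_nonneg {ι : Type*} {m : ι → ℝ} (x : ι → ℝ) {k : ι} (hm : 0 ≤ m k) :
    0 ≤ clamp m x k :=
  le_min (le_max_right _ _) hm

theorem clamp_eq_zero {ι : Type*} {m x : ι → ℝ} {k : ι} (hm : 0 ≤ m k) (hx : x k ≤ 0) :
    clamp m x k = 0 := by
  rw [clamp, max_eq_right hx, min_eq_left hm]

theorem hasDerivAt_exp_mul_mul {f : ℝ → ℝ} {f' a s : ℝ} (hf : HasDerivAt f f' s) :
    HasDerivAt (fun t => Real.exp (a * t) * f t) (Real.exp (a * s) * (a * f s + f')) s := by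
  have hexp := ((hasDerivAt_id s).const_mul a).exp
  exact (hexp.mul hf).congr_deriv (by simp only [id, mul_one]; ring)

theorem monotoneOn_exp_mul_mul {f f' : ℝ → ℝ} {a : ℝ}
    (hf : ∀ s, 0 ≤ s → HasDerivAt f (f' s) s) (hf' : ∀ s, 0 ≤ s → -a * f s ≤ f' s) :
    MonotoneOn (fun t => Real.exp (a * t) * f t) (Set.Ici 0) := by
  refine monotoneOn_of_hasDerivWithinAt_nonneg (convex_Ici 0)
    (fun s hs => (hasDerivAt_exp_mul_mul (hf s hs)).continuousAt.continuousWithinAt)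
    (fun s hs => (hasDerivAt_exp_mul_mul (hf s (interior_subset hs : (0:ℝ) ≤ s))).hasDerivWithinAt)
    fun s hs => ?_
  exact mul_nonneg (Real.exp_pos _).le (by linarith [hf' s (interior_subset hs)])

theorem nonneg_of_neg_mul_le_deriv {f f' : ℝ → ℝ} {a t : ℝ}
    (hf : ∀ s, 0 ≤ s → HasDerivAt f (f' s) s) (hf' : ∀ s, 0 ≤ s → -a * f s ≤ f' s)
    (h0 : 0 ≤ f 0) (ht : 0 ≤ t) : 0 ≤ f t := by
  have hmono := monotoneOn_exp_mul_mul hf hf' Set.self_mem_Ici ht ht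
  simp only [mul_zero, Real.exp_zero, one_mul] at hmono
  exact nonneg_of_mul_nonneg_right (h0.trans hmono) (Real.exp_pos _)

theorem eq_exp_mul_of_deriv_eq_neg_mul {f : ℝ → ℝ} {a t : ℝ}
    (hf : ∀ s, 0 ≤ s → HasDerivAt f (-a * f s) s) (ht : 0 ≤ t) :
    f t = Real.exp (-(a * t)) * f 0 := by
  have hup := monotoneOn_exp_mul_mul hf (fun s _ => le_rfl) Set.self_mem_Ici ht ht
  have hdown := monotoneOn_exp_mul_mul (f := fun s => -f s) (f' := fun s => -(-a * f s))
    (fun s hs => (hf s hs).neg) (fun s _ => (mul_neg _ _).le) Set.self_mem_Ici ht ht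
  simp only [mul_zero, Real.exp_zero, one_mul, mul_neg, neg_le_neg_iff] at hup hdown
  rw [Real.exp_neg, eq_inv_mul_iff_mul_eq₀ (Real.exp_ne_zero _)]
  exact le_antisymm hdown hup

theorem closedLoop_apply_nonpos {ρ σ π : Type*} [Fintype σ] [Fintype π]
    {W : Matrix ρ σ ℝ} {B : Matrix ρ π ℝ} {K : Matrix π σ ℝ} {x : σ → ℝ} {u : π → ℝ}
    {w c : ρ → ℝ} {i : ρ} (hK : ∀ j, (B * K) i j ≤ -W i j) (hu : (B *ᵥ u) i ≤ -w i - c i)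
    (hx : 0 ≤ x) :
    (W *ᵥ x + w + B *ᵥ (K *ᵥ x + u) + c) i ≤ 0 := by
  have hfeedback : ((B * K) *ᵥ x) i ≤ -(W *ᵥ x) i := by
    rw [← Pi.neg_apply, ← neg_mulVec]
    exact dotProduct_le_dotProduct_of_nonneg_right hK hx
  simp only [Pi.add_apply, mulVec_add, mulVec_mulVec]
  linarith

theorem feedback_feedforward_inhibition_general {r q pdim : ℕ}
    (τ : ℝ) (hτ : 0 < τ)
    (W : Matrix (Fin r ⊕ Fin q) (Fin r ⊕ Fin q) ℝ)
    (B : Matrix (Fin r ⊕ Fin q) (Fin pdim) ℝ)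
    (w : ℝ → (Fin r ⊕ Fin q) → ℝ)
    (c m : (Fin r ⊕ Fin q) → ℝ) (hm : ∀ kk, 0 < m kk)
    (K : Matrix (Fin pdim) (Fin r ⊕ Fin q) ℝ)
    (ubar : ℝ → Fin pdim → ℝ)
    (hK : ∀ (k : Fin r) (l : Fin r ⊕ Fin q),
      ((Matrix.of fun (kk : Fin r) (ll : Fin pdim) => B (Sum.inl kk) ll) * K) k l
        ≤ -W (Sum.inl k) l)
    (hu : ∀ t, 0 ≤ t → ∀ k : Fin r,
      ((Matrix.of fun (kk : Fin r) (ll : Fin pdim) => B (Sum.inl kk) ll) *ᵥ ubar t) k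
        ≤ -(w t (Sum.inl k)) - c (Sum.inl k))
    (x : ℝ → (Fin r ⊕ Fin q) → ℝ)
    (hx0 : ∀ kk, 0 ≤ x 0 kk ∧ x 0 kk ≤ m kk)
    (hdyn : ∀ t, 0 ≤ t → HasDerivAt x
      (τ⁻¹ • (-x t + clamp m (W *ᵥ x t + w t + B *ᵥ (K *ᵥ x t + ubar t) + c))) t) :
    (∀ t, 0 ≤ t → ∀ k : Fin r,
      HasDerivAt (fun tt => x tt (Sum.inl k)) (-(x t (Sum.inl k)) / τ) t) ∧
    (∀ t, 0 ≤ t → ∀ k : Fin r,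
      x t (Sum.inl k) = Real.exp (-t / τ) * x 0 (Sum.inl k)) := by
  have hcomp : ∀ t, 0 ≤ t → ∀ kk, HasDerivAt (fun s => x s kk)
      (-τ⁻¹ * x t kk
        + τ⁻¹ * clamp m (W *ᵥ x t + w t + B *ᵥ (K *ᵥ x t + ubar t) + c) kk) t := by
    intro t ht kk
    refine (hasDerivAt_pi.1 (hdyn t ht) kk).congr_deriv ?_
    simp only [Pi.smul_apply, Pi.add_apply, Pi.neg_apply, smul_eq_mul]
    ring
  have hnonneg : ∀ t, 0 ≤ t → 0 ≤ x t := fun t ht kk =>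
    nonneg_of_neg_mul_le_deriv (fun s hs => hcomp s hs kk)
      (fun s _ => le_add_of_nonneg_right
        (mul_nonneg (inv_nonneg.2 hτ.le) (clamp_nonneg _ (hm kk).le)))
      (hx0 kk).1 ht
  have hderiv : ∀ t, 0 ≤ t → ∀ k : Fin r,
      HasDerivAt (fun s => x s (Sum.inl k)) (-τ⁻¹ * x t (Sum.inl k)) t := by
    intro t ht k
    -- `B^0 K` and `B^0 ū` are, definitionally, the `Sum.inl` rows of `B * K` and `B *ᵥ ū`.
    have hsilent :
        clamp m (W *ᵥ x t + w t + B *ᵥ (K *ᵥ x t + ubar t) + c) (Sum.inl k) = 0 :=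
      clamp_eq_zero (hm _).le (closedLoop_apply_nonpos (hK k) (hu t ht k) (hnonneg t ht))
    simpa only [hsilent, mul_zero, add_zero] using hcomp t ht (Sum.inl k)
  refine ⟨fun t ht k => (hderiv t ht k).congr_deriv (by ring), fun t ht k => ?_⟩
  rw [eq_exp_mul_of_deriv_eq_neg_mul (hderiv · · k) ht, neg_div, inv_mul_eq_div]

/-- Selective inhibition of the task-irrelevant components of one layer.  The state is
partitioned as `x = (x^0, x^1)` (indices `Sum.inl` are task-irrelevant, `Sum.inr` are
task-relevant).  If the feedback-feedforward control `u(t) = K x(t) + ū(t)` satisfies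
`B^0 K ≤ −W^{0,all}` and `B^0 ū(t) ≤ −w^0(t) − c^0` entrywise, then the closed-loop
task-irrelevant dynamics reduces to `τ ẋ^0 = −x^0`, whence `x^0(t) = e^{−t/τ} x^0(0)`. -/
theorem feedback_feedforward_inhibition {r q pdim : ℕ}
    (τ : ℝ) (hτ : 0 < τ)
    (W : Matrix (Fin r ⊕ Fin q) (Fin r ⊕ Fin q) ℝ)
    (B : Matrix (Fin r ⊕ Fin q) (Fin pdim) ℝ)
    (hBlow : ∀ (k : Fin q) (l : Fin pdim), B (Sum.inr k) l = 0)
    (hBrank : (Matrix.of fun (k : Fin r) (l : Fin pdim) => B (Sum.inl k) l).rank = r)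
    (hpr : r ≤ pdim)
    (w : ℝ → (Fin r ⊕ Fin q) → ℝ) (hw : Continuous w)
    (c m : (Fin r ⊕ Fin q) → ℝ) (hm : ∀ kk, 0 < m kk)
    (K : Matrix (Fin pdim) (Fin r ⊕ Fin q) ℝ)
    (ubar : ℝ → Fin pdim → ℝ)
    (hK : ∀ (k : Fin r) (l : Fin r ⊕ Fin q),
      ((Matrix.of fun (kk : Fin r) (ll : Fin pdim) => B (Sum.inl kk) ll) * K) k l
        ≤ -W (Sum.inl k) l)
    (hu : ∀ t, 0 ≤ t → ∀ k : Fin r,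
      ((Matrix.of fun (kk : Fin r) (ll : Fin pdim) => B (Sum.inl kk) ll) *ᵥ ubar t) k
        ≤ -(w t (Sum.inl k)) - c (Sum.inl k))
    (x : ℝ → (Fin r ⊕ Fin q) → ℝ)
    (hx0 : ∀ kk, 0 ≤ x 0 kk ∧ x 0 kk ≤ m kk)
    (hdyn : ∀ t, 0 ≤ t → HasDerivAt x
      (τ⁻¹ • (-x t + clamp m (W *ᵥ x t + w t + B *ᵥ (K *ᵥ x t + ubar t) + c))) t) :
    (∀ t, 0 ≤ t → ∀ k : Fin r,
      HasDerivAt (fun tt => x tt (Sum.inl k)) (-(x t (Sum.inl k)) / τ) t) ∧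
    (∀ t, 0 ≤ t → ∀ k : Fin r,
      x t (Sum.inl k) = Real.exp (-t / τ) * x 0 (Sum.inl k)) :=
  feedback_feedforward_inhibition_general τ hτ W B w c m hm K ubar hK hu x hx0 hdyn
end
end
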